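/- arXiv:hep-th/9807016 — 3 statements merged into one kernel-verified Lean document; each statement's English description precedes it below -/
import Mathlib

section
/- The vector space of real tensors T_{[ab]c} in D dimensions that are antisymmetric in the first two indices (T_{[ab]c} = -T_{[ba]c}) and satisfy the cyclic identity T_{[ab]c} + T_{[ca]b} + T_{[bc]a} = 0 has dimension D(D-1)(D+1)/3. -/
/-- The submodule of tensors `T_{[ab]c}` antisymmetric in the first two indices
and satisfying the cyclic identity. -/
def mixedSymTensors (D : ℕ) : Submodule ℝ (Fin D → Fin D → Fin D → ℝ) where
  carrier := {T | (∀ a b c, T a b c = - T b a c) ∧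
                  (∀ a b c, T a b c + T c a b + T b c a = 0)}
  zero_mem' := by
    constructor <;> intro a b c <;> simp
  add_mem' := by
    rintro T S ⟨hT1, hT2⟩ ⟨hS1, hS2⟩
    constructor <;> intro a b c
    · simp only [Pi.add_apply]; rw [hT1 a b c, hS1 a b c]; ring
    · have h1 := hT2 a b c; have h2 := hS2 a b c
      simp only [Pi.add_apply]; linarith
  smul_mem' := by
    rintro r T ⟨hT1, hT2⟩
    constructor <;> intro a b c
    · simp only [Pi.smul_apply, smul_eq_mul]; rw [hT1 a b c]; ring
    · have h1 := hT2 a b c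
      simp only [Pi.smul_apply, smul_eq_mul]; linear_combination r * h1

def idxSet (D : ℕ) : Finset (Fin D × Fin D × Fin D) :=
  Finset.univ.filter fun p => p.1 < p.2.1 ∧ p.1 ≤ p.2.2

lemma mem_idxSet {D : ℕ} {p : Fin D × Fin D × Fin D} :
    p ∈ idxSet D ↔ p.1 < p.2.1 ∧ p.1 ≤ p.2.2 := by
  simp [idxSet]

noncomputable def extFun (D : ℕ) (g : Fin D × Fin D × Fin D → ℝ) :
    Fin D → Fin D → Fin D → ℝ := fun a b c =>
  if a < b then (if a ≤ c then g (a,b,c) else -g (c,a,b) + g (c,b,a))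
  else if b < a then -(if b ≤ c then g (b,a,c) else -g (c,b,a) + g (c,a,b))
  else 0

theorem extFun_anti (D : ℕ) (g) (a b c : Fin D) :
    extFun D g a b c = - extFun D g b a c := by
  unfold extFun
  split_ifs <;> first | ring1 | omega

theorem extFun_cyc (D : ℕ) (g) (a b c : Fin D) :
    extFun D g a b c + extFun D g c a b + extFun D g b c a = 0 := by
  rcases lt_trichotomy a b with hab|hab|hab <;>
  rcases lt_trichotomy a c with hac|hac|hac <;>
  rcases lt_trichotomy b c with hbc|hbc|hbc <;>
  (try subst hab) <;> (try subst hac) <;> (try subst hbc) <;>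
  first
  | omega
  | (unfold extFun; split_ifs <;> first | ring1 | omega)

theorem extFun_mem (D : ℕ) (g) : extFun D g ∈ mixedSymTensors D :=
  ⟨extFun_anti D g, extFun_cyc D g⟩

/-- extFun only depends on values of g on idxSet. -/
theorem extFun_congr (D : ℕ) (g₁ g₂ : Fin D × Fin D × Fin D → ℝ)
    (h : ∀ p ∈ idxSet D, g₁ p = g₂ p) : extFun D g₁ = extFun D g₂ := by
  have H : ∀ x y z : Fin D, x < y → x ≤ z → g₁ (x,y,z) = g₂ (x,y,z) :=
    fun x y z h1 h2 => h _ (mem_idxSet.2 ⟨h1, h2⟩)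
  funext a b c
  unfold extFun
  split_ifs with h1 h2 h3 h4
  · rw [H a b c (by omega) (by omega)]
  · rw [H c a b (by omega) (by omega), H c b a (by omega) (by omega)]
  · rw [H b a c (by omega) (by omega)]
  · rw [H c b a (by omega) (by omega), H c a b (by omega) (by omega)]
  · rfl

theorem extFun_add (D : ℕ) (g₁ g₂ : Fin D × Fin D × Fin D → ℝ) :
    extFun D (g₁ + g₂) = extFun D g₁ + extFun D g₂ := by
  funext a b c
  simp only [Pi.add_apply, extFun]
  split_ifs <;> ring

theorem extFun_smul (D : ℕ) (r : ℝ) (g : Fin D × Fin D × Fin D → ℝ) :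
    extFun D (r • g) = r • extFun D g := by
  funext a b c
  simp only [Pi.smul_apply, smul_eq_mul, extFun]
  split_ifs <;> ring

/-- For T in the subspace, extFun of its restriction recovers T. -/
theorem extFun_recover (D : ℕ) (T : Fin D → Fin D → Fin D → ℝ)
    (hT : T ∈ mixedSymTensors D) :
    extFun D (fun p => T p.1 p.2.1 p.2.2) = T := by
  obtain ⟨h1, h2⟩ := hT
  funext a b c
  have key : ∀ x y z : Fin D, T x y z = - T z x y + T z y x := by
    intro x y z
    have := h2 x y z
    have := h1 y z x
    linarith
  have diag : ∀ x z : Fin D, T x x z = 0 := by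
    intro x z
    have := h1 x x z; linarith
  unfold extFun
  split_ifs with hab hac hba hbc
  · rfl
  · exact (key a b c).symm
  · rw [h1 a b c]
  · rw [h1 a b c, key b a c]
  · have hh : a = b := by omega
    subst hh; rw [diag]

noncomputable def restrMap (D : ℕ) : mixedSymTensors D →ₗ[ℝ] (↥(idxSet D) → ℝ) where
  toFun T := fun p => (T : Fin D → Fin D → Fin D → ℝ) p.1.1 p.1.2.1 p.1.2.2
  map_add' T S := rfl
  map_smul' r T := rfl

noncomputable def extMap (D : ℕ) : (↥(idxSet D) → ℝ) →ₗ[ℝ] mixedSymTensors D where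
  toFun f := ⟨extFun D (fun p => if h : p ∈ idxSet D then f ⟨p, h⟩ else 0),
    extFun_mem D _⟩
  map_add' f g := by
    apply Subtype.ext
    simp only [Submodule.coe_add]
    have hg : (fun p => if h : p ∈ idxSet D then (f + g) ⟨p, h⟩ else 0)
        = (fun p => if h : p ∈ idxSet D then f ⟨p, h⟩ else 0)
          + (fun p => if h : p ∈ idxSet D then g ⟨p, h⟩ else 0) := by
      funext p
      by_cases h : p ∈ idxSet D <;> simp [h]
    rw [hg, extFun_add]
  map_smul' r f := by
    apply Subtype.ext
    simp only [RingHom.id_apply, SetLike.val_smul]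
    have hg : (fun p => if h : p ∈ idxSet D then (r • f) ⟨p, h⟩ else 0)
        = r • (fun p => if h : p ∈ idxSet D then f ⟨p, h⟩ else 0) := by
      funext p
      by_cases h : p ∈ idxSet D <;> simp [h]
    rw [hg, extFun_smul]

lemma extMap_coe (D : ℕ) (f : ↥(idxSet D) → ℝ) :
    ((extMap D f : mixedSymTensors D) : Fin D → Fin D → Fin D → ℝ)
      = extFun D (fun p => if h : p ∈ idxSet D then f ⟨p, h⟩ else 0) := rfl

lemma restrMap_apply (D : ℕ) (T : mixedSymTensors D) (p : ↥(idxSet D)) :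
    restrMap D T p = (T : Fin D → Fin D → Fin D → ℝ) p.1.1 p.1.2.1 p.1.2.2 := rfl

noncomputable def tensorEquiv (D : ℕ) : (↥(idxSet D) → ℝ) ≃ₗ[ℝ] mixedSymTensors D :=
  LinearEquiv.ofLinear (extMap D) (restrMap D)
    (by
      apply LinearMap.ext
      intro T
      simp only [LinearMap.comp_apply, LinearMap.id_apply]
      apply Subtype.ext
      rw [extMap_coe]
      rw [extFun_congr D _ (fun p => (T : Fin D → Fin D → Fin D → ℝ) p.1 p.2.1 p.2.2)
        (fun p hp => by rw [dif_pos hp]; rfl)]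
      exact extFun_recover D _ T.2)
    (by
      apply LinearMap.ext
      intro f
      simp only [LinearMap.comp_apply, LinearMap.id_apply]
      funext p
      rw [restrMap_apply, extMap_coe]
      obtain ⟨⟨a, b, c⟩, hp⟩ := p
      obtain ⟨h1, h2⟩ := mem_idxSet.1 hp
      simp only [extFun, if_pos h1, if_pos h2, dif_pos hp])

lemma idxSet_eq (D : ℕ) :
    idxSet D = Finset.univ.biUnion
      (fun a : Fin D => {a} ×ˢ ((Finset.Ioi a) ×ˢ (Finset.Ici a))) := by
  ext ⟨a, b, c⟩
  simp [idxSet, eq_comm]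

lemma card_idxSet (D : ℕ) :
    (idxSet D).card = ∑ m ∈ Finset.range D, m * (m + 1) := by
  rw [idxSet_eq, Finset.card_biUnion]
  · have step : ∀ a : Fin D,
        ({a} ×ˢ ((Finset.Ioi a) ×ˢ (Finset.Ici a))).card = (D - 1 - a) * (D - a) := by
      intro a
      rw [Finset.card_product, Finset.card_product, Finset.card_singleton,
        Fin.card_Ioi, Fin.card_Ici]
      ring
    rw [Finset.sum_congr rfl (fun a _ => step a)]
    rw [Fin.sum_univ_eq_sum_range (fun m => (D - 1 - m) * (D - m))]
    rw [← Finset.sum_range_reflect (fun m => m * (m + 1)) D]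
    apply Finset.sum_congr rfl
    intro m hm
    have : m < D := Finset.mem_range.1 hm
    have h1 : D - 1 - m + 1 = D - m := by omega
    rw [← h1]
  · intro i _ j _ hij
    simp only [Finset.disjoint_left]
    rintro ⟨a, b, c⟩ h1 h2
    simp only [Finset.mem_product, Finset.mem_singleton] at h1 h2
    exact hij (h1.1 ▸ h2.1 ▸ rfl)

lemma three_mul_sum (D : ℕ) :
    3 * ∑ m ∈ Finset.range D, m * (m + 1) = (D - 1) * D * (D + 1) := by
  induction D with
  | zero => simp
  | succ n ih =>
    rw [Finset.sum_range_succ, Nat.mul_add, ih]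
    cases n with
    | zero => simp
    | succ k =>
      simp only [Nat.succ_sub_one]
      ring

theorem mixedSymTensors_finrank (D : ℕ) :
    Module.finrank ℝ (mixedSymTensors D) = D * (D - 1) * (D + 1) / 3 := by
  have h1 : Module.finrank ℝ (mixedSymTensors D)
      = Module.finrank ℝ (↥(idxSet D) → ℝ) := ((tensorEquiv D).symm).finrank_eq
  rw [h1, Module.finrank_fintype_fun_eq_card, Fintype.card_coe]
  have h2 := three_mul_sum D
  rw [← card_idxSet] at h2
  have h3 : (D - 1) * D * (D + 1) = D * (D - 1) * (D + 1) := by ring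
  rw [h3] at h2
  omega
end

section
/- The Euler-Lagrange tensor E_{[ab]c} = ∂^d F_{[abd]c} - ∂_c F_{[abx]}{}^x satisfies the Noether identity ∂_a E^{[ab]c} + (1/2)∂^c E^b ≡ 0 identically (i.e., for any smooth field T), where E^a = 2∂^y F_{[yax]}{}^x. -/
/-- Partial derivative in coordinate direction `a`. -/
noncomputable def pd {n : ℕ} (a : Fin n) (f : (Fin n → ℝ) → ℝ) (x : Fin n → ℝ) : ℝ :=
  fderiv ℝ f x (Pi.single a 1)

lemma pd_congr {n : ℕ} {a : Fin n} {f g : (Fin n → ℝ) → ℝ} (h : ∀ y, f y = g y)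
    (x : Fin n → ℝ) : pd a f x = pd a g x := by rw [funext h]

lemma ContDiff.pd' {n : ℕ} {f : (Fin n → ℝ) → ℝ} (hf : ContDiff ℝ (⊤ : ℕ∞) f) (a : Fin n) :
    ContDiff ℝ (⊤ : ℕ∞) (pd a f) :=
  (hf.fderiv_right (by simp)).clm_apply contDiff_const

lemma pd_add {n : ℕ} {a : Fin n} {f g : (Fin n → ℝ) → ℝ} {x : Fin n → ℝ}
    (hf : DifferentiableAt ℝ f x) (hg : DifferentiableAt ℝ g x) :
    pd a (fun y => f y + g y) x = pd a f x + pd a g x := by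
  unfold pd; rw [fderiv_fun_add hf hg]; rfl

lemma pd_sub {n : ℕ} {a : Fin n} {f g : (Fin n → ℝ) → ℝ} {x : Fin n → ℝ}
    (hf : DifferentiableAt ℝ f x) (hg : DifferentiableAt ℝ g x) :
    pd a (fun y => f y - g y) x = pd a f x - pd a g x := by
  unfold pd; rw [fderiv_fun_sub hf hg]; rfl

lemma pd_neg {n : ℕ} {a : Fin n} {f : (Fin n → ℝ) → ℝ} {x : Fin n → ℝ} :
    pd a (fun y => -f y) x = -pd a f x := by
  unfold pd; rw [fderiv_fun_neg]; rfl

lemma pd_const_mul {n : ℕ} {a : Fin n} {f : (Fin n → ℝ) → ℝ} {x : Fin n → ℝ} (c : ℝ)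
    (hf : DifferentiableAt ℝ f x) :
    pd a (fun y => c * f y) x = c * pd a f x := by
  unfold pd; rw [fderiv_const_mul hf]; rfl

lemma pd_sum {n : ℕ} {a : Fin n} {x : Fin n → ℝ} {ι : Type*} (s : Finset ι)
    {f : ι → (Fin n → ℝ) → ℝ} (hf : ∀ i ∈ s, DifferentiableAt ℝ (f i) x) :
    pd a (fun y => ∑ i ∈ s, f i y) x = ∑ i ∈ s, pd a (f i) x := by
  unfold pd; rw [fderiv_fun_sum hf]; simp

lemma pd_comm {n : ℕ} {f : (Fin n → ℝ) → ℝ} (hf : ContDiff ℝ (⊤ : ℕ∞) f) (a b : Fin n)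
    (x : Fin n → ℝ) : pd a (pd b f) x = pd b (pd a f) x := by
  have hd : Differentiable ℝ (fderiv ℝ f) := (hf.fderiv_right (m := (⊤ : ℕ∞)) (by simp)).differentiable (by simp)
  have key : ∀ v w : Fin n → ℝ, fderiv ℝ (fun y => fderiv ℝ f y v) x w
      = fderiv ℝ (fderiv ℝ f) x w v := by
    intro v w
    rw [fderiv_clm_apply (hd x) (differentiableAt_const v)]
    simp
  have hsymm : fderiv ℝ (fderiv ℝ f) x (Pi.single a 1) (Pi.single b 1)
      = fderiv ℝ (fderiv ℝ f) x (Pi.single b 1) (Pi.single a 1) :=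
    (hf.contDiffAt.isSymmSndFDerivAt (by rw [minSmoothness_of_isRCLikeNormedField]; exact WithTop.coe_le_coe.mpr (le_top : (2 : ℕ∞) ≤ ⊤))).eq _ _
  unfold pd
  rw [key, key, hsymm]

/-- The Noether identity `∂_a E^{[ab]c} + (1/2) ∂^c E^b ≡ 0` holds off-shell
(Euclidean metric, indices raised with the identity metric). -/
theorem noether_identity (D : ℕ)
    (T : (Fin D → ℝ) → Fin D → Fin D → Fin D → ℝ)
    (hsmooth : ∀ a b c, ContDiff ℝ (⊤ : ℕ∞) (fun x => T x a b c))
    (hA : ∀ x a b c, T x a b c = - T x b a c)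
    (F : (Fin D → ℝ) → Fin D → Fin D → Fin D → Fin D → ℝ)
    (hF : ∀ x a b c d, F x a b c d =
      pd a (fun y => T y b c d) x + pd b (fun y => T y c a d) x
        + pd c (fun y => T y a b d) x)
    (E : (Fin D → ℝ) → Fin D → Fin D → Fin D → ℝ)
    (hE : ∀ x a b c, E x a b c =
      (∑ d, pd d (fun y => F y a b d c) x) - pd c (fun y => ∑ e, F y a b e e) x)
    (Etr : (Fin D → ℝ) → Fin D → ℝ)
    (hEtr : ∀ x a, Etr x a = ∑ e, E x a e e) :
    ∀ (x : Fin D → ℝ) (b c : Fin D),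
      (∑ a, pd a (fun y => E y a b c) x) + (1 / 2 : ℝ) * pd c (fun y => Etr y b) x = 0 := by
  intro x b c
  have dd : ∀ {f : (Fin D → ℝ) → ℝ}, ContDiff ℝ (⊤ : ℕ∞) f → ∀ y, DifferentiableAt ℝ f y :=
    fun h y => (h.differentiable (by simp)) y
  -- smoothness of the components of F
  have hFs : ∀ a b' c' d, ContDiff ℝ (⊤ : ℕ∞) (fun y => F y a b' c' d) := by
    intro a b' c' d
    have h : (fun y => F y a b' c' d) = fun y =>
        pd a (fun z => T z b' c' d) y + pd b' (fun z => T z c' a d) y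
          + pd c' (fun z => T z a b' d) y := funext fun y => hF y a b' c' d
    rw [h]
    exact (((hsmooth b' c' d).pd' a).add ((hsmooth c' a d).pd' b')).add
      ((hsmooth a b' d).pd' c')
  -- antisymmetry of T lifted through one derivative
  have pdT : ∀ (i p q r : Fin D) (y), pd i (fun z => T z p q r) y
      = - pd i (fun z => T z q p r) y := by
    intro i p q r y
    rw [pd_congr (fun z => hA z p q r) y, pd_neg]
  -- antisymmetry of T lifted through two derivatives
  have P2anti : ∀ (i j p q r : Fin D) (y), pd i (pd j (fun z => T z p q r)) y
      = - pd i (pd j (fun z => T z q p r)) y := by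
    intro i j p q r y
    rw [pd_congr (fun z => pdT j p q r z) y, pd_neg]
  -- antisymmetry of F in its two outer indices
  have hFanti : ∀ (y) (a d : Fin D), F y a b d c = - F y d b a c := by
    intro y a d
    rw [hF y a b d c, hF y d b a c, pdT a b d c y, pdT b d a c y, pdT d a b c y]
    ring
  -- expansion of a derivative of F in second derivatives of T
  have expandF : ∀ (i a' b' c' d' : Fin D) (y), pd i (fun z => F z a' b' c' d') y
      = pd i (pd a' (fun w => T w b' c' d')) y + pd i (pd b' (fun w => T w c' a' d')) y
        + pd i (pd c' (fun w => T w a' b' d')) y := by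
    intro i a' b' c' d' y
    rw [pd_congr (fun z => hF z a' b' c' d') y,
      pd_add (dd (((hsmooth b' c' d').pd' a').add ((hsmooth c' a' d').pd' b')) y)
        (dd ((hsmooth a' b' d').pd' c') y),
      pd_add (dd ((hsmooth b' c' d').pd' a') y) (dd ((hsmooth c' a' d').pd' b') y)]
  -- expand each term of the divergence of E
  have expandE : ∀ a : Fin D, pd a (fun y => E y a b c) x
      = (∑ d, pd a (pd d (fun z => F z a b d c)) x)
        - pd c (pd a (fun z => ∑ e, F z a b e e)) x := by
    intro a
    rw [pd_congr (fun y => hE y a b c) x,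
      pd_sub (dd (ContDiff.sum fun d _ => (hFs a b d c).pd' d) x)
        (dd ((ContDiff.sum fun e _ => hFs a b e e).pd' c) x),
      pd_sum Finset.univ (fun d _ => dd ((hFs a b d c).pd' d) x),
      pd_comm (ContDiff.sum fun e _ => hFs a b e e) a c x]
  -- the symmetric-antisymmetric double sum vanishes
  have claim1 : ∑ a : Fin D, ∑ d : Fin D, pd a (pd d (fun z => F z a b d c)) x = 0 := by
    have hsk : ∀ a d : Fin D, pd a (pd d (fun z => F z a b d c)) x
        = - pd d (pd a (fun z => F z d b a c)) x := by
      intro a d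
      have inner : ∀ z, pd d (fun w => F w a b d c) z
          = - pd d (fun w => F w d b a c) z := by
        intro z; rw [pd_congr (fun w => hFanti w a d) z, pd_neg]
      calc pd a (pd d (fun z => F z a b d c)) x
          = pd a (fun z => - pd d (fun w => F w d b a c) z) x := pd_congr inner x
        _ = - pd a (pd d (fun w => F w d b a c)) x := pd_neg
        _ = - pd d (pd a (fun w => F w d b a c)) x := by
            rw [pd_comm (hFs d b a c) a d x]
    have hSS : (∑ a : Fin D, ∑ d : Fin D, pd a (pd d (fun z => F z a b d c)) x)
        = - ∑ a : Fin D, ∑ d : Fin D, pd a (pd d (fun z => F z a b d c)) x := by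
      calc (∑ a : Fin D, ∑ d : Fin D, pd a (pd d (fun z => F z a b d c)) x)
          = ∑ a : Fin D, ∑ d : Fin D, - pd d (pd a (fun z => F z d b a c)) x :=
            Finset.sum_congr rfl fun a _ => Finset.sum_congr rfl fun d _ => hsk a d
        _ = - ∑ a : Fin D, ∑ d : Fin D, pd d (pd a (fun z => F z d b a c)) x := by
            simp
        _ = - ∑ d : Fin D, ∑ a : Fin D, pd d (pd a (fun z => F z d b a c)) x := by
            rw [Finset.sum_comm]
    linarith
  -- step 1 : the divergence of E equals -∂_c G
  have step1 : ∑ a : Fin D, pd a (fun y => E y a b c) x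
      = - pd c (fun y => ∑ a, pd a (fun z => ∑ e, F z a b e e) y) x := by
    calc ∑ a : Fin D, pd a (fun y => E y a b c) x
        = ∑ a : Fin D, ((∑ d, pd a (pd d (fun z => F z a b d c)) x)
            - pd c (pd a (fun z => ∑ e, F z a b e e)) x) :=
          Finset.sum_congr rfl fun a _ => expandE a
      _ = (∑ a : Fin D, ∑ d, pd a (pd d (fun z => F z a b d c)) x)
            - ∑ a : Fin D, pd c (pd a (fun z => ∑ e, F z a b e e)) x :=
          Finset.sum_sub_distrib _ _
      _ = - ∑ a : Fin D, pd c (pd a (fun z => ∑ e, F z a b e e)) x := by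
          rw [claim1]; ring
      _ = - pd c (fun y => ∑ a, pd a (fun z => ∑ e, F z a b e e) y) x := by
          rw [pd_sum Finset.univ
            (fun a _ => dd ((ContDiff.sum fun e _ => hFs a b e e).pd' a) x)]
  -- expansion of G in second derivatives of T
  have hGexp : ∀ y, (∑ a : Fin D, pd a (fun z => ∑ e, F z a b e e) y)
      = ∑ a : Fin D, ∑ e : Fin D, (pd a (pd a (fun w => T w b e e)) y
        + pd a (pd b (fun w => T w e a e)) y + pd a (pd e (fun w => T w a b e)) y) := by
    intro y
    refine Finset.sum_congr rfl fun a _ => ?_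
    rw [pd_sum Finset.univ (fun e _ => dd (hFs a b e e) y)]
    exact Finset.sum_congr rfl fun e _ => expandF a a b e e y
  -- Etr equals twice G pointwise
  have hEtrExp : ∀ y, Etr y b = 2 * (∑ a : Fin D, pd a (fun z => ∑ e, F z a b e e) y) := by
    intro y
    rw [hEtr y b]
    have he : ∀ e : Fin D, E y b e e
        = (∑ d : Fin D, (pd d (pd b (fun w => T w e d e)) y
            + pd d (pd e (fun w => T w d b e)) y + pd d (pd d (fun w => T w b e e)) y))
          - ∑ f : Fin D, (pd e (pd b (fun w => T w e f f)) y
            + pd e (pd e (fun w => T w f b f)) y + pd e (pd f (fun w => T w b e f)) y) := by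
      intro e
      rw [hE y b e e]
      congr 1
      · exact Finset.sum_congr rfl fun d _ => expandF d b e d e y
      · rw [pd_sum Finset.univ (fun f _ => dd (hFs b e f f) y)]
        exact Finset.sum_congr rfl fun f _ => expandF e b e f f y
    have g1 : (∑ d : Fin D, ∑ e : Fin D, (pd d (pd b (fun w => T w e d e)) y
          + pd d (pd e (fun w => T w d b e)) y + pd d (pd d (fun w => T w b e e)) y))
        = ∑ a : Fin D, pd a (fun z => ∑ e, F z a b e e) y := by
      rw [hGexp y]
      exact Finset.sum_congr rfl fun a _ => Finset.sum_congr rfl fun e _ => by ring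
    have g2 : (∑ e : Fin D, ∑ f : Fin D, (pd e (pd b (fun w => T w e f f)) y
          + pd e (pd e (fun w => T w f b f)) y + pd e (pd f (fun w => T w b e f)) y))
        = - ∑ a : Fin D, pd a (fun z => ∑ e, F z a b e e) y := by
      have hterm : ∀ e f : Fin D, pd e (pd b (fun w => T w e f f)) y
            + pd e (pd e (fun w => T w f b f)) y + pd e (pd f (fun w => T w b e f)) y
          = -(pd e (pd e (fun w => T w b f f)) y + pd e (pd b (fun w => T w f e f)) y
            + pd e (pd f (fun w => T w e b f)) y) := by
        intro e f
        rw [P2anti e b e f f y, P2anti e e f b f y, P2anti e f b e f y]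
        ring
      calc (∑ e : Fin D, ∑ f : Fin D, (pd e (pd b (fun w => T w e f f)) y
            + pd e (pd e (fun w => T w f b f)) y + pd e (pd f (fun w => T w b e f)) y))
          = ∑ e : Fin D, ∑ f : Fin D, -(pd e (pd e (fun w => T w b f f)) y
            + pd e (pd b (fun w => T w f e f)) y + pd e (pd f (fun w => T w e b f)) y) :=
            Finset.sum_congr rfl fun e _ => Finset.sum_congr rfl fun f _ => hterm e f
        _ = - ∑ e : Fin D, ∑ f : Fin D, (pd e (pd e (fun w => T w b f f)) y
            + pd e (pd b (fun w => T w f e f)) y + pd e (pd f (fun w => T w e b f)) y) := by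
            simp only [Finset.sum_neg_distrib]
        _ = - ∑ a : Fin D, pd a (fun z => ∑ e, F z a b e e) y := by rw [hGexp y]
    calc ∑ e : Fin D, E y b e e
        = ∑ e : Fin D, ((∑ d : Fin D, (pd d (pd b (fun w => T w e d e)) y
            + pd d (pd e (fun w => T w d b e)) y + pd d (pd d (fun w => T w b e e)) y))
          - ∑ f : Fin D, (pd e (pd b (fun w => T w e f f)) y
            + pd e (pd e (fun w => T w f b f)) y + pd e (pd f (fun w => T w b e f)) y)) :=
          Finset.sum_congr rfl fun e _ => he e
      _ = (∑ e : Fin D, ∑ d : Fin D, (pd d (pd b (fun w => T w e d e)) y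
            + pd d (pd e (fun w => T w d b e)) y + pd d (pd d (fun w => T w b e e)) y))
          - ∑ e : Fin D, ∑ f : Fin D, (pd e (pd b (fun w => T w e f f)) y
            + pd e (pd e (fun w => T w f b f)) y + pd e (pd f (fun w => T w b e f)) y) :=
          Finset.sum_sub_distrib _ _
      _ = (∑ d : Fin D, ∑ e : Fin D, (pd d (pd b (fun w => T w e d e)) y
            + pd d (pd e (fun w => T w d b e)) y + pd d (pd d (fun w => T w b e e)) y))
          - ∑ e : Fin D, ∑ f : Fin D, (pd e (pd b (fun w => T w e f f)) y
            + pd e (pd e (fun w => T w f b f)) y + pd e (pd f (fun w => T w b e f)) y) := by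
          rw [Finset.sum_comm]
      _ = 2 * (∑ a : Fin D, pd a (fun z => ∑ e, F z a b e e) y) := by
          rw [g1, g2]; ring
  -- conclude
  have hGs : ContDiff ℝ (⊤ : ℕ∞) (fun y => ∑ a : Fin D, pd a (fun z => ∑ e, F z a b e e) y) :=
    ContDiff.sum fun a _ => (ContDiff.sum fun e _ => hFs a b e e).pd' a
  have hEtrPd : pd c (fun y => Etr y b) x
      = 2 * pd c (fun y => ∑ a : Fin D, pd a (fun z => ∑ e, F z a b e e) y) x := by
    rw [pd_congr (fun y => hEtrExp y) x, pd_const_mul 2 (dd hGs x)]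
  rw [step1, hEtrPd]
  ring
end

section
/- For the Koszul-type differential on two generators (D y = z, D z = 0, over k[y,z]), the cohomology is trivial in positive degree: every polynomial P(y,z) with D(P) = 0 and P(0,0) = 0 is of the form D(Q) for some polynomial Q. -/
/-!
Since `D = z ∂/∂y` and `z` is not a zero divisor, a closed `P` satisfies `∂P/∂y = 0`; in
characteristic zero this forces `P = p(z)` for a one-variable polynomial `p`. Without constant
term, `p = z q`, and then `P = z q(z) = D(y q(z))` because `D` kills `k[z]`.
-/

open MvPolynomial

/-- The Koszul differential on `k[y,z]`: `D y = z`, `D z = 0`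
(variable `0` is `y`, variable `1` is `z`). -/
noncomputable def koszulD (k : Type) [CommRing k] :
    Derivation k (MvPolynomial (Fin 2) k) (MvPolynomial (Fin 2) k) :=
  mkDerivation k fun i => if i = 0 then X 1 else 0

namespace MvPolynomial

theorem notMem_vars_of_pderiv_eq_zero {R σ : Type*} [CommSemiring R] [IsAddTorsionFree R]
    {i : σ} {f : MvPolynomial σ R} (h : pderiv i f = 0) : i ∉ f.vars := by
  intro hi
  obtain ⟨d, hd, hdi⟩ := (mem_vars_iff_mem_support i).mp hi
  have hle : Finsupp.single i 1 ≤ d :=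
    Finsupp.single_le_iff.mpr (Nat.one_le_iff_ne_zero.mpr (Finsupp.mem_support_iff.mp hdi))
  have hcoeff := coeff_pderiv (i := i) f (d - Finsupp.single i 1)
  rw [h, coeff_zero, tsub_add_cancel_of_le hle, ← Nat.cast_succ, mul_comm, ← nsmul_eq_mul,
    eq_comm, nsmul_eq_zero_iff] at hcoeff
  exact mem_support_iff.mp hd (hcoeff.resolve_right (Nat.succ_ne_zero _))

theorem constantCoeff_aeval_X {R σ : Type*} [CommSemiring R] (i : σ) (p : Polynomial R) :
    constantCoeff (Polynomial.aeval (X i : MvPolynomial σ R) p) = p.coeff 0 := by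
  simp [Polynomial.aeval_def, Polynomial.hom_eval₂]

end MvPolynomial

section

variable {k : Type} [CommRing k]

@[simp]
theorem koszulD_X_zero : koszulD k (X 0) = X 1 := by
  simp [koszulD, mkDerivation_X]

@[simp]
theorem koszulD_X_one : koszulD k (X 1) = 0 := by
  simp [koszulD, mkDerivation_X]

theorem koszulD_eq_X_one_smul_pderiv_zero :
    koszulD k = (X 1 : MvPolynomial (Fin 2) k) • pderiv 0 := by
  apply derivation_ext
  intro i
  fin_cases i <;> simp

theorem koszulD_aeval_X_one (p : Polynomial k) : koszulD k (Polynomial.aeval (X 1) p) = 0 := by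
  simp

theorem koszulD_X_zero_mul_aeval_X_one (p : Polynomial k) :
    koszulD k (X 0 * Polynomial.aeval (X 1) p) = X 1 * Polynomial.aeval (X 1) p := by
  rw [Derivation.leibniz, koszulD_aeval_X_one, koszulD_X_zero, smul_zero, zero_add, smul_eq_mul,
    mul_comm]

theorem exists_aeval_X_one_eq_of_koszulD_eq_zero [IsDomain k] [CharZero k]
    {P : MvPolynomial (Fin 2) k} (h : koszulD k P = 0) :
    ∃ p : Polynomial k, Polynomial.aeval (X 1) p = P := by
  rw [koszulD_eq_X_one_smul_pderiv_zero, Derivation.smul_apply, smul_eq_mul, mul_eq_zero,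
    or_iff_right (X_ne_zero 1)] at h
  have hP : P ∈ supported k {1} := by
    rw [mem_supported]
    intro i hi
    fin_cases i
    · exact absurd hi (notMem_vars_of_pderiv_eq_zero h)
    · rfl
  rwa [supported_eq_adjoin_X, Set.image_singleton, Algebra.adjoin_singleton_eq_range_aeval] at hP

end

/-- Rank-one case of the Basic Lemma: the cohomology of the Koszul differential
on `k[y,z]` is trivial in positive degree: every closed polynomial with zero
constant term is exact. -/
theorem koszul_cohomology_trivial (k : Type) [Field k] [CharZero k]
    (P : MvPolynomial (Fin 2) k) (hclosed : koszulD k P = 0)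
    (hconst : constantCoeff P = 0) :
    ∃ Q : MvPolynomial (Fin 2) k, P = koszulD k Q := by
  obtain ⟨p, rfl⟩ := exists_aeval_X_one_eq_of_koszulD_eq_zero hclosed
  obtain ⟨q, rfl⟩ := Polynomial.X_dvd_iff.mpr (by rwa [constantCoeff_aeval_X] at hconst)
  refine ⟨X 0 * Polynomial.aeval (X 1) q, ?_⟩
  rw [koszulD_X_zero_mul_aeval_X_one, map_mul, Polynomial.aeval_X]
end
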